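/- Let R be a commutative ring, m ≥ 0 a natural number, C, B, Q ∈ R, and suppose the main identity A_{2m}(C,B,Q) = G_{2m}(C,B) holds (with weight P = m−1−Q). Then A_{2m}(C−1, B, Q−1) · (A_2(C+m, B, Q+m) + A_2(C+m, B, Q−m)) = A_{2m}(C−1, B, Q−1)·(C+m−B)(C+m+B) + A_{2(m+1)}(C, B, Q), where A_2(x, y, w) = (x+w)(x−w) − (y−w)(y+w) = x² − y². -/
import Mathlib


/-- `A_{2m}(C,B,Q)` with the weight convention `P = m - 1 - Q`. -/
def ambientPower {R : Type*} [CommRing R] (m : ℕ) (C B Q : R) : R :=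
  ∑ ℓ ∈ Finset.range (m + 1),
    (-1 : R) ^ (m - ℓ) * (Nat.choose m ℓ : R) *
      (∏ i ∈ Finset.range ℓ, (C + Q - 2 * (i : R)) * (C - Q + 2 * (i : R))) *
      (∏ j ∈ Finset.range (m - ℓ),
        (B + ((m : R) - 1 - Q) - 2 * (j : R)) * (B - ((m : R) - 1 - Q) + 2 * (j : R)))

/-- `G_{2m}(C,B)`. -/
def productForm {R : Type*} [CommRing R] (m : ℕ) (C B : R) : R :=
  ∏ i ∈ Finset.range m,
    (C + B + (m : R) - 1 - 2 * (i : R)) * (C - B + (m : R) - 1 - 2 * (i : R))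

namespace Stmt17Aux

variable {R : Type*} [CommRing R]

def aR (C Q : R) (n : ℕ) : R := ∏ i ∈ Finset.range n, (C + Q - 2 * (i : R))
def bR (C Q : R) (n : ℕ) : R := ∏ i ∈ Finset.range n, (C - Q + 2 * (i : R))
def yR (B P : R) (n : ℕ) : R :=
  ∏ j ∈ Finset.range n, ((B + P - 2 * (j : R)) * (B - P + 2 * (j : R)))

lemma aR_zero (C Q : R) : aR C Q 0 = 1 := rfl
lemma bR_zero (C Q : R) : bR C Q 0 = 1 := rfl

lemma aR_succ (C Q : R) (n : ℕ) :
    aR C Q (n + 1) = aR C Q n * (C + Q - 2 * (n : R)) :=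
  Finset.prod_range_succ _ _

lemma bR_succ (C Q : R) (n : ℕ) :
    bR C Q (n + 1) = bR C Q n * (C - Q + 2 * (n : R)) :=
  Finset.prod_range_succ _ _

lemma yR_succ (B P : R) (n : ℕ) :
    yR B P (n + 1) = yR B P n * ((B + P - 2 * (n : R)) * (B - P + 2 * (n : R))) :=
  Finset.prod_range_succ _ _

lemma aR_succ' (C Q : R) (n : ℕ) :
    aR C Q (n + 1) = (C + Q) * aR (C - 1) (Q - 1) n := by
  unfold aR
  rw [Finset.prod_range_succ']
  rw [mul_comm]
  congr 1
  · push_cast; ring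
  · refine Finset.prod_congr rfl fun i _ => ?_
    push_cast; ring

lemma bR_shift (C Q : R) (n : ℕ) : bR (C - 1) (Q - 1) n = bR C Q n := by
  refine Finset.prod_congr rfl fun i _ => ?_
  ring

lemma ambient_eq (m : ℕ) (C B Q P : R) (hP : P = (m : R) - 1 - Q) :
    ambientPower m C B Q
      = ∑ ℓ ∈ Finset.range (m + 1),
          (-1 : R) ^ (m - ℓ) * (m.choose ℓ : R) *
            (aR C Q ℓ * bR C Q ℓ * yR B P (m - ℓ)) := by
  subst hP
  unfold ambientPower aR bR yR
  refine Finset.sum_congr rfl fun ℓ _ => ?_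
  rw [Finset.prod_mul_distrib]
  ring

lemma key (m : ℕ) (C B Q : R) :
    ambientPower (m + 1) C B Q
      = ambientPower m (C - 1) B (Q - 1) * ((C + (m : R)) ^ 2 - B ^ 2) := by
  set P : R := (m : R) - Q with hPdef
  set E : R := (C + (m : R)) ^ 2 - B ^ 2 with hEdef
  set W : ℕ → R := fun k =>
    (-1 : R) ^ (m - k) * (((m - k) * m.choose k : ℕ) : R) *
      (2 * (Q - C - 2 * (k : R)) * (aR (C - 1) (Q - 1) k * bR C Q k * yR B P (m - k)))
    with hW
  have h2 : ambientPower m (C - 1) B (Q - 1)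
      = ∑ ℓ ∈ Finset.range (m + 1),
          (-1 : R) ^ (m - ℓ) * (m.choose ℓ : R) *
            (aR (C - 1) (Q - 1) ℓ * bR C Q ℓ * yR B P (m - ℓ)) := by
    rw [ambient_eq m (C - 1) B (Q - 1) P (by rw [hPdef]; ring)]
    exact Finset.sum_congr rfl fun ℓ _ => by rw [bR_shift]
  rw [ambient_eq (m + 1) C B Q P (by rw [hPdef]; push_cast; ring), h2, Finset.sum_mul]
  -- Step A : Pascal split of the (m+1)-sum
  have stepA :
      (∑ ℓ ∈ Finset.range (m + 1 + 1),
          (-1 : R) ^ (m + 1 - ℓ) * ((m + 1).choose ℓ : R) *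
            (aR C Q ℓ * bR C Q ℓ * yR B P (m + 1 - ℓ)))
      = ∑ ℓ ∈ Finset.range (m + 1),
          (-1 : R) ^ (m - ℓ) * (m.choose ℓ : R) *
            (aR C Q (ℓ + 1) * bR C Q (ℓ + 1) * yR B P (m - ℓ)
              - aR C Q ℓ * bR C Q ℓ * yR B P (m + 1 - ℓ)) := by
    rw [Finset.sum_range_succ']
    have e1 : ∀ ℓ ∈ Finset.range (m + 1),
        (-1 : R) ^ (m + 1 - (ℓ + 1)) * ((m + 1).choose (ℓ + 1) : R) *
            (aR C Q (ℓ + 1) * bR C Q (ℓ + 1) * yR B P (m + 1 - (ℓ + 1)))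
        = (-1 : R) ^ (m - ℓ) * (m.choose ℓ : R) *
              (aR C Q (ℓ + 1) * bR C Q (ℓ + 1) * yR B P (m - ℓ))
          + ((-1 : R) ^ (m + 1 - (ℓ + 1)) * (m.choose (ℓ + 1) : R) *
              (aR C Q (ℓ + 1) * bR C Q (ℓ + 1) * yR B P (m + 1 - (ℓ + 1)))) := by
      intro ℓ _
      rw [Nat.succ_sub_succ, Nat.choose_succ_succ]
      push_cast
      ring
    rw [Finset.sum_congr rfl e1, Finset.sum_add_distrib]
    -- now handle the second (shifted) sum
    have e2 :
        (∑ ℓ ∈ Finset.range (m + 1),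
            (-1 : R) ^ (m + 1 - (ℓ + 1)) * (m.choose (ℓ + 1) : R) *
              (aR C Q (ℓ + 1) * bR C Q (ℓ + 1) * yR B P (m + 1 - (ℓ + 1))))
          + (-1 : R) ^ (m + 1 - 0) * ((m + 1).choose 0 : R) *
              (aR C Q 0 * bR C Q 0 * yR B P (m + 1 - 0))
        = ∑ ℓ ∈ Finset.range (m + 1 + 1),
            (-1 : R) ^ (m + 1 - ℓ) * (m.choose ℓ : R) *
              (aR C Q ℓ * bR C Q ℓ * yR B P (m + 1 - ℓ)) := by
      rw [Finset.sum_range_succ' (fun ℓ =>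
        (-1 : R) ^ (m + 1 - ℓ) * (m.choose ℓ : R) *
          (aR C Q ℓ * bR C Q ℓ * yR B P (m + 1 - ℓ))) (m + 1)]
      simp [Nat.choose_zero_right]
    have e3 :
        (∑ ℓ ∈ Finset.range (m + 1 + 1),
            (-1 : R) ^ (m + 1 - ℓ) * (m.choose ℓ : R) *
              (aR C Q ℓ * bR C Q ℓ * yR B P (m + 1 - ℓ)))
        = - ∑ ℓ ∈ Finset.range (m + 1),
            (-1 : R) ^ (m - ℓ) * (m.choose ℓ : R) *
              (aR C Q ℓ * bR C Q ℓ * yR B P (m + 1 - ℓ)) := by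
      rw [Finset.sum_range_succ, Nat.choose_succ_self]
      rw [← Finset.sum_neg_distrib]
      have e4 : ∀ ℓ ∈ Finset.range (m + 1),
          (-1 : R) ^ (m + 1 - ℓ) * (m.choose ℓ : R) *
            (aR C Q ℓ * bR C Q ℓ * yR B P (m + 1 - ℓ))
          = -((-1 : R) ^ (m - ℓ) * (m.choose ℓ : R) *
              (aR C Q ℓ * bR C Q ℓ * yR B P (m + 1 - ℓ))) := by
        intro ℓ hℓ
        have hle : ℓ ≤ m := Nat.lt_succ_iff.mp (Finset.mem_range.mp hℓ)
        have : m + 1 - ℓ = (m - ℓ) + 1 := by omega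
        rw [this, pow_succ]
        ring
      rw [Finset.sum_congr rfl e4]
      simp
    have e5 :
        (∑ ℓ ∈ Finset.range (m + 1),
            (-1 : R) ^ (m - ℓ) * (m.choose ℓ : R) *
              (aR C Q (ℓ + 1) * bR C Q (ℓ + 1) * yR B P (m - ℓ)
                - aR C Q ℓ * bR C Q ℓ * yR B P (m + 1 - ℓ)))
        = (∑ ℓ ∈ Finset.range (m + 1),
            (-1 : R) ^ (m - ℓ) * (m.choose ℓ : R) *
              (aR C Q (ℓ + 1) * bR C Q (ℓ + 1) * yR B P (m - ℓ)))
          - ∑ ℓ ∈ Finset.range (m + 1),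
              (-1 : R) ^ (m - ℓ) * (m.choose ℓ : R) *
                (aR C Q ℓ * bR C Q ℓ * yR B P (m + 1 - ℓ)) := by
      rw [← Finset.sum_sub_distrib]
      exact Finset.sum_congr rfl fun ℓ _ => by ring
    rw [e5]
    linear_combination e2 + e3
  rw [stepA]
  -- Step B : telescoping via the certificate W
  rw [← sub_eq_zero, ← Finset.sum_sub_distrib, Finset.sum_range_succ']
  have cert : ∀ k ∈ Finset.range m,
      (-1 : R) ^ (m - (k + 1)) * (m.choose (k + 1) : R) *
          (aR C Q (k + 1 + 1) * bR C Q (k + 1 + 1) * yR B P (m - (k + 1))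
            - aR C Q (k + 1) * bR C Q (k + 1) * yR B P (m + 1 - (k + 1)))
        - (-1 : R) ^ (m - (k + 1)) * (m.choose (k + 1) : R) *
            (aR (C - 1) (Q - 1) (k + 1) * bR C Q (k + 1) * yR B P (m - (k + 1))) * E
      = W (k + 1) - W k := by
    intro k hk
    have hkm : k < m := Finset.mem_range.mp hk
    have i1 : m + 1 - (k + 1) = (m - (k + 1)) + 1 := by omega
    have i2 : m - k = (m - (k + 1)) + 1 := by omega
    have hcast : ((m - (k + 1) : ℕ) : R) = (m : R) - (k : R) - 1 := by
      rw [Nat.cast_sub (by omega)]; push_cast; ring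
    have hch : (m - k) * m.choose k = (k + 1) * m.choose (k + 1) := by
      rw [mul_comm, ← Nat.choose_succ_right_eq, mul_comm]
    simp only [hW]
    rw [hch, i1, i2, yR_succ, pow_succ]
    rw [aR_succ' C Q (k + 1), aR_succ' C Q k, aR_succ (C - 1) (Q - 1) k,
      bR_succ C Q (k + 1), bR_succ C Q k]
    push_cast [Nat.cast_sub (show k + 1 ≤ m by omega)]
    rw [hPdef, hEdef]
    ring
  rw [Finset.sum_congr rfl cert, Finset.sum_range_sub]
  have hW0 :
      (-1 : R) ^ (m - 0) * (m.choose 0 : R) *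
          (aR C Q (0 + 1) * bR C Q (0 + 1) * yR B P (m - 0)
            - aR C Q 0 * bR C Q 0 * yR B P (m + 1 - 0))
        - (-1 : R) ^ (m - 0) * (m.choose 0 : R) *
            (aR (C - 1) (Q - 1) 0 * bR C Q 0 * yR B P (m - 0)) * E
      = W 0 := by
    simp only [hW]
    simp only [Nat.sub_zero, Nat.choose_zero_right, Nat.cast_one, Nat.cast_zero,
      aR_zero, bR_zero, mul_one, Nat.mul_one]
    rw [aR_succ' C Q 0, bR_succ C Q 0, aR_zero, bR_zero, yR_succ]
    rw [hPdef, hEdef]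
    push_cast
    ring
  have hWm : W m = 0 := by
    simp only [hW]; simp
  rw [hW0, hWm]
  ring

end Stmt17Aux

theorem stmt17 {R : Type*} [CommRing R] (m : ℕ) (C B Q : R)
    (hmain : ambientPower m C B Q = productForm m C B) :
    ambientPower m (C - 1) B (Q - 1) *
        (ambientPower 1 (C + (m : R)) B (Q + (m : R)) +
          ambientPower 1 (C + (m : R)) B (Q - (m : R))) =
      ambientPower m (C - 1) B (Q - 1) * ((C + (m : R) - B) * (C + (m : R) + B)) +
        ambientPower (m + 1) C B Q := by
  have hA2 : ∀ x w : R, ambientPower 1 x B w = x ^ 2 - B ^ 2 := by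
    intro x w
    simp [ambientPower, Finset.sum_range_succ, Finset.prod_range_succ]
    push_cast
    ring
  rw [hA2, hA2, Stmt17Aux.key m C B Q]
  ring
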